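/- arXiv:2506.11500 — 7 statements merged into one kernel-verified Lean document; each statement's English description precedes it below -/
import Mathlib

section
/- There exists a countably infinite abelian group G such that for all natural numbers n < m, the topology Z_n(G) is strictly contained in the topology Z_m(G). In particular, for every n ∈ ℕ, Z(G) = Z±(G) ≠ Z±_n(G) = Z_n(G). -/
/-!
In an abelian group every semigroup or group polynomial is a map `x ↦ a * x ^ e`, so
`Z_n` and `Z±_n` are both generated by the sets `{x | x ^ e ≠ c}` with `|e| ≤ n`, and
`Z` and `Z±` by all of them. The complement of a nonempty open set of that topology is
covered by finitely many fibres `{x | x ^ e = c}` with `0 < |e| ≤ n`. In `G = ⊕_ℕ ℚ/ℤ`,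
pick `u` of order `m > n`: the complement of `{x | x ^ m ≠ 1}` contains the elements
`u • δ_j`, any two of which differ by an element of order `m`, so no such fibre contains
two of them. Hence `{x | x ^ m ≠ 1}` is `Z_m`-open but not `Z_n`-open.
-/

open Topology TopologicalSpace

/-- Evaluation of the semigroup polynomial `a₀ x a₁ x ⋯ x aₙ`, encoded by its first
coefficient `a` and the list `l = [a₁, …, aₙ]` of remaining coefficients
(so the degree is `l.length`). -/
def sgEval {M : Type*} [Monoid M] (x a : M) (l : List M) : M :=
  a * (l.map (fun b => x * b)).prod

/-- The semigroup Zariski topology `Z(M)`, generated by the sets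
`{x | f x ≠ g x}` with `f, g` semigroup polynomials. -/
def sgZariski (M : Type*) [Monoid M] : TopologicalSpace M :=
  generateFrom {U | ∃ (a : M) (l : List M) (b : M) (m : List M),
    U = {x | sgEval x a l ≠ sgEval x b m}}

/-- The bounded semigroup Zariski topology `Z_n(M)`, generated by the sets
`{x | f x ≠ g x}` with `f, g` semigroup polynomials of degree at most `n`. -/
def sgZariskiLe (M : Type*) [Monoid M] (n : ℕ) : TopologicalSpace M :=
  generateFrom {U | ∃ (a : M) (l : List M) (b : M) (m : List M),
    l.length ≤ n ∧ m.length ≤ n ∧ U = {x | sgEval x a l ≠ sgEval x b m}}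

/-- Evaluation of the group polynomial `a₀ x^{ε₁} a₁ ⋯ x^{εₙ} aₙ`, encoded by its first
coefficient `a` and the list `l = [(ε₁,a₁), …, (εₙ,aₙ)]`, where `true` stands for the
exponent `1` and `false` for the exponent `-1` (so the degree is `l.length`). -/
def gpEval {G : Type*} [Group G] (x a : G) (l : List (Bool × G)) : G :=
  a * (l.map (fun p => (if p.1 then x else x⁻¹) * p.2)).prod

/-- The group Zariski topology `Z±(G)`, generated by the sets `{x | f x ≠ 1}`
with `f` a group polynomial. -/
def gpZariski (G : Type*) [Group G] : TopologicalSpace G :=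
  generateFrom {U | ∃ (a : G) (l : List (Bool × G)), U = {x | gpEval x a l ≠ 1}}

/-- The bounded group Zariski topology `Z±_n(G)`, generated by the sets `{x | f x ≠ 1}`
with `f` a group polynomial of degree at most `n`. -/
def gpZariskiLe (G : Type*) [Group G] (n : ℕ) : TopologicalSpace G :=
  generateFrom {U | ∃ (a : G) (l : List (Bool × G)), l.length ≤ n ∧ U = {x | gpEval x a l ≠ 1}}
section CommGroup

variable {G : Type*} [CommGroup G]

theorem sgEval_eq_mul_pow (x a : G) (l : List G) : sgEval x a l = a * l.prod * x ^ l.length := by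
  rw [sgEval, List.prod_map_mul, List.map_const', List.prod_replicate, List.map_id',
    mul_comm (x ^ _), mul_assoc]

def expSum {α : Type*} (l : List (Bool × α)) : ℤ := (l.map fun p => if p.1 then 1 else -1).sum

theorem natAbs_expSum_le_length {α : Type*} (l : List (Bool × α)) :
    (expSum l).natAbs ≤ l.length := by
  induction l with
  | nil => simp [expSum]
  | cons p l ih =>
    rcases p with ⟨_ | _, _⟩ <;> simp only [expSum, List.map_cons, List.sum_cons] at ih ⊢ <;>
      simp <;> omega

theorem prod_map_ite_inv_eq_zpow_expSum (x : G) (l : List (Bool × G)) :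
    (l.map fun p => if p.1 then x else x⁻¹).prod = x ^ expSum l := by
  induction l with
  | nil => simp [expSum]
  | cons p l ih =>
    rcases p with ⟨_ | _, _⟩ <;>
      simp only [expSum, List.map_cons, List.prod_cons, List.sum_cons] at ih ⊢ <;>
      simp [ih, zpow_add]

theorem gpEval_eq_mul_zpow (x a : G) (l : List (Bool × G)) :
    gpEval x a l = a * (l.map Prod.snd).prod * x ^ expSum l := by
  rw [gpEval, List.prod_map_mul, prod_map_ite_inv_eq_zpow_expSum, mul_comm (x ^ _), mul_assoc]

theorem zpow_eq_iff_pow_natAbs_eq (x c : G) (e : ℤ) :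
    x ^ e = c ↔ x ^ e.natAbs = if 0 ≤ e then c else c⁻¹ := by
  rcases le_or_gt 0 e with he | he
  · rw [if_pos he, ← zpow_natCast, Int.natAbs_of_nonneg he]
  · rw [if_neg he.not_ge, ← zpow_natCast, Int.ofNat_natAbs_of_nonpos he.le, zpow_neg,
      inv_eq_iff_eq_inv, inv_inv]

def zpowNeSets (G : Type*) [Group G] (n : ℕ) : Set (Set G) :=
  {U | ∃ (e : ℤ) (c : G), e.natAbs ≤ n ∧ U = {x | x ^ e ≠ c}}

theorem zpowNeSets_mono {n m : ℕ} (h : n ≤ m) : zpowNeSets G n ⊆ zpowNeSets G m := by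
  rintro U ⟨e, c, he, rfl⟩
  exact ⟨e, c, he.trans h, rfl⟩

theorem setOf_sgEval_ne (a b : G) (l m : List G) :
    {x | sgEval x a l ≠ sgEval x b m} =
      {x | x ^ ((l.length : ℤ) - m.length) ≠ (a * l.prod)⁻¹ * (b * m.prod)} := by
  ext x
  refine not_congr ?_
  rw [sgEval_eq_mul_pow, sgEval_eq_mul_pow, zpow_sub, zpow_natCast, zpow_natCast,
    mul_inv_eq_iff_eq_mul, mul_assoc (a * l.prod)⁻¹, eq_inv_mul_iff_mul_eq]

theorem setOf_zpow_ne_eq_sgEval (e : ℤ) (c : G) :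
    {x | x ^ e ≠ c} = {x | sgEval x 1 (List.replicate e.natAbs 1) ≠
      sgEval x (if 0 ≤ e then c else c⁻¹) []} := by
  ext x
  simp [sgEval_eq_mul_pow, zpow_eq_iff_pow_natAbs_eq]

theorem setOf_gpEval_ne_one (a : G) (l : List (Bool × G)) :
    {x | gpEval x a l ≠ 1} = {x | x ^ expSum l ≠ (a * (l.map Prod.snd).prod)⁻¹} := by
  ext x
  exact not_congr (by rw [gpEval_eq_mul_zpow, mul_eq_one_iff_inv_eq, eq_comm])

theorem expSum_replicate {α : Type*} (e : ℤ) (b : α) :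
    expSum (List.replicate e.natAbs (decide (0 ≤ e), b)) = e := by
  rcases le_or_gt 0 e with he | he
  · simp [expSum, he]
  · simp [expSum, he.not_ge, abs_of_neg he]

theorem setOf_zpow_ne_eq_gpEval (e : ℤ) (c : G) :
    {x | x ^ e ≠ c} =
      {x | gpEval x c⁻¹ (List.replicate e.natAbs (decide (0 ≤ e), 1)) ≠ 1} := by
  rw [setOf_gpEval_ne_one, expSum_replicate]
  simp

theorem sgZariskiLe_eq_generateFrom (n : ℕ) :
    sgZariskiLe G n = generateFrom (zpowNeSets G n) := by
  refine congrArg generateFrom (Set.ext fun U => ⟨?_, ?_⟩)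
  · rintro ⟨a, l, b, m, hl, hm, rfl⟩
    exact ⟨_, _, by omega, setOf_sgEval_ne a b l m⟩
  · rintro ⟨e, c, he, rfl⟩
    exact ⟨_, _, _, [], by simpa using he, by simp, setOf_zpow_ne_eq_sgEval e c⟩

theorem sgZariski_eq_generateFrom : sgZariski G = generateFrom (⋃ n, zpowNeSets G n) := by
  refine congrArg generateFrom (Set.ext fun U => ⟨?_, ?_⟩)
  · rintro ⟨a, l, b, m, rfl⟩
    exact Set.mem_iUnion.2 ⟨_, _, _, le_rfl, setOf_sgEval_ne a b l m⟩
  · rw [Set.mem_iUnion]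
    rintro ⟨n, e, c, -, rfl⟩
    exact ⟨_, _, _, [], setOf_zpow_ne_eq_sgEval e c⟩

theorem gpZariskiLe_eq_generateFrom (n : ℕ) :
    gpZariskiLe G n = generateFrom (zpowNeSets G n) := by
  refine congrArg generateFrom (Set.ext fun U => ⟨?_, ?_⟩)
  · rintro ⟨a, l, hl, rfl⟩
    exact ⟨_, _, (natAbs_expSum_le_length l).trans hl, setOf_gpEval_ne_one a l⟩
  · rintro ⟨e, c, he, rfl⟩
    exact ⟨_, _, by simpa using he, setOf_zpow_ne_eq_gpEval e c⟩

theorem gpZariski_eq_generateFrom : gpZariski G = generateFrom (⋃ n, zpowNeSets G n) := by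
  refine congrArg generateFrom (Set.ext fun U => ⟨?_, ?_⟩)
  · rintro ⟨a, l, rfl⟩
    exact Set.mem_iUnion.2 ⟨_, _, _, le_rfl, setOf_gpEval_ne_one a l⟩
  · rw [Set.mem_iUnion]
    rintro ⟨n, e, c, -, rfl⟩
    exact ⟨_, _, setOf_zpow_ne_eq_gpEval e c⟩

end CommGroup

section Covering

variable {G : Type*} [CommGroup G] {n : ℕ}

def CoveredByZPowFibers (n : ℕ) (A : Set G) : Prop :=
  ∃ F : Finset (ℤ × G), (∀ p ∈ F, p.1 ≠ 0 ∧ p.1.natAbs ≤ n) ∧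
    A ⊆ ⋃ p ∈ F, {x | x ^ p.1 = p.2}

theorem CoveredByZPowFibers.empty : CoveredByZPowFibers n (∅ : Set G) :=
  ⟨∅, by simp, Set.empty_subset _⟩

theorem CoveredByZPowFibers.mono {A B : Set G} (hAB : A ⊆ B) (hB : CoveredByZPowFibers n B) :
    CoveredByZPowFibers n A :=
  let ⟨F, hF, hBF⟩ := hB
  ⟨F, hF, hAB.trans hBF⟩

theorem CoveredByZPowFibers.union {A B : Set G} (hA : CoveredByZPowFibers n A)
    (hB : CoveredByZPowFibers n B) : CoveredByZPowFibers n (A ∪ B) := by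
  classical
  obtain ⟨F, hF, hAF⟩ := hA
  obtain ⟨F', hF', hBF'⟩ := hB
  refine ⟨F ∪ F', fun p hp => (Finset.mem_union.1 hp).elim (hF p) (hF' p), ?_⟩
  rw [Finset.set_biUnion_union]
  exact Set.union_subset_union hAF hBF'

theorem eq_empty_or_coveredByZPowFibers_compl_of_mem {V : Set G} (hV : V ∈ zpowNeSets G n) :
    V = ∅ ∨ CoveredByZPowFibers n Vᶜ := by
  obtain ⟨e, c, he, rfl⟩ := hV
  rcases eq_or_ne e 0 with rfl | he0
  · by_cases hc : c = 1
    · simp [hc]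
    · right
      simpa [Ne.symm hc] using CoveredByZPowFibers.empty
  · right
    refine ⟨{(e, c)}, by simp [he0, he], ?_⟩
    intro x hx
    simpa using hx

theorem eq_empty_or_coveredByZPowFibers_compl_of_generateOpen {V : Set G}
    (hV : GenerateOpen (zpowNeSets G n) V) : V = ∅ ∨ CoveredByZPowFibers n Vᶜ := by
  induction hV with
  | basic U hU => exact eq_empty_or_coveredByZPowFibers_compl_of_mem hU
  | univ => exact Or.inr (by simpa using CoveredByZPowFibers.empty)
  | inter U V _ _ ihU ihV =>
    rcases ihU with rfl | hU
    · simp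
    rcases ihV with rfl | hV
    · simp
    exact Or.inr (Set.compl_inter U V ▸ hU.union hV)
  | sUnion S _ ih =>
    by_cases hS : ∃ U ∈ S, U.Nonempty
    · obtain ⟨U, hUS, hU⟩ := hS
      exact Or.inr (((ih U hUS).resolve_left hU.ne_empty).mono
        (Set.compl_subset_compl.2 (Set.subset_sUnion_of_mem hUS)))
    · exact Or.inl (Set.sUnion_eq_empty.2 fun U hUS =>
        Set.not_nonempty_iff_eq_empty.1 fun hU => hS ⟨U, hUS, hU⟩)

theorem not_coveredByZPowFibers_range {ι : Type*} [Infinite ι] {f : ι → G}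
    (hf : Pairwise fun i j => n < orderOf (f i / f j)) :
    ¬ CoveredByZPowFibers n (Set.range f) := by
  rintro ⟨F, hF, hfF⟩
  have hfiber : ∀ i, ∃ p : F, f i ^ p.1.1 = p.1.2 := fun i => by
    simpa using hfF (Set.mem_range_self i)
  choose g hg using hfiber
  obtain ⟨i, j, hij, hgij⟩ := Finite.exists_ne_map_eq_of_infinite g
  obtain ⟨he0, hen⟩ := hF _ (g i).2
  have hdiv : (f i / f j) ^ (g i).1.1 = 1 := by
    rw [div_zpow, hg i, hgij, hg j, div_self']
  have hdvd := Int.natAbs_dvd_natAbs.2 (orderOf_dvd_iff_zpow_eq_one.2 hdiv)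
  have hle := Nat.le_of_dvd (Int.natAbs_pos.2 he0) (by simpa using hdvd)
  exact (hf hij).not_ge (hle.trans hen)

theorem not_isOpen_generateFrom_zpowNeSets {V : Set G} (hV : V.Nonempty) {ι : Type*} [Infinite ι]
    {f : ι → G} (hfV : ∀ i, f i ∉ V) (hf : Pairwise fun i j => n < orderOf (f i / f j)) :
    ¬ IsOpen[generateFrom (zpowNeSets G n)] V := fun hVopen =>
  not_coveredByZPowFibers_range hf <|
    ((eq_empty_or_coveredByZPowFibers_compl_of_generateOpen hVopen).resolve_left
      hV.ne_empty).mono (Set.range_subset_iff.2 hfV)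

end Covering

instance {𝕜 : Type*} [AddCommGroup 𝕜] [Countable 𝕜] (p : 𝕜) :
    Countable (AddCircle p) :=
  (QuotientAddGroup.mk_surjective (s := AddSubgroup.zmultiples p)).countable

theorem AddCircle.exists_addOrderOf_eq_rat {k : ℕ} (hk : 0 < k) :
    ∃ u : AddCircle (1 : ℚ), addOrderOf u = k :=
  ⟨_, AddCircle.addOrderOf_period_div hk⟩

instance : Nontrivial (AddCircle (1 : ℚ)) :=
  let ⟨u, hu⟩ := AddCircle.exists_addOrderOf_eq_rat two_pos
  ⟨⟨u, 0, fun h => by simp [h] at hu⟩⟩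

section FinsuppSingle

open Multiplicative

variable {ι A : Type*} [AddCommGroup A]

theorem orderOf_ofAdd_single (i : ι) (u : A) :
    orderOf (ofAdd (Finsupp.single i u)) = addOrderOf u := by
  rw [orderOf_ofAdd_eq_addOrderOf]
  exact addOrderOf_injective (Finsupp.singleAddHom i) (Finsupp.single_injective i) u

theorem orderOf_ofAdd_single_div_single {i j : ι} (hij : i ≠ j) (u : A) :
    orderOf (ofAdd (Finsupp.single i u) / ofAdd (Finsupp.single j u)) = addOrderOf u := by
  rw [← ofAdd_sub, orderOf_ofAdd_eq_addOrderOf]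
  refine Nat.dvd_antisymm (addOrderOf_dvd_of_nsmul_eq_zero ?_) ?_
  · rw [smul_sub, Finsupp.smul_single, Finsupp.smul_single, addOrderOf_nsmul_eq_zero,
      Finsupp.single_zero, Finsupp.single_zero, sub_zero]
  · simpa [hij.symm] using addOrderOf_map_dvd (Finsupp.applyAddHom i)
      (Finsupp.single i u - Finsupp.single j u)

end FinsuppSingle

abbrev RatCircleSum : Type := Multiplicative (ℕ →₀ AddCircle (1 : ℚ))

open Multiplicative in
theorem not_isOpen_setOf_zpow_ne_one {n m : ℕ} (h : n < m) :
    ¬ IsOpen[generateFrom (zpowNeSets RatCircleSum n)] {x | x ^ (m : ℤ) ≠ 1} := by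
  have hm : 0 < m := by omega
  obtain ⟨u, hu⟩ := AddCircle.exists_addOrderOf_eq_rat hm
  obtain ⟨v, hv⟩ := AddCircle.exists_addOrderOf_eq_rat m.succ_pos
  refine not_isOpen_generateFrom_zpowNeSets (f := fun j : ℕ => ofAdd (Finsupp.single j u))
    ⟨ofAdd (Finsupp.single 0 v), fun hpow => ?_⟩ (fun j => ?_) (fun i j hij => ?_)
  · rw [zpow_natCast, ← orderOf_dvd_iff_pow_eq_one, orderOf_ofAdd_single, hv] at hpow
    exact (Nat.le_of_dvd hm hpow).not_gt m.lt_succ_self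
  · exact not_not.2 (by rw [zpow_natCast, ← hu, ← orderOf_ofAdd_single j, pow_orderOf_eq_one])
  · show n < _
    rwa [orderOf_ofAdd_single_div_single hij, hu]

/-- There exists a countably infinite abelian group `G` such that the bounded Zariski
topologies `Z_n(G)` are strictly increasing in `n`; in particular, for every `n`,
`Z(G) = Z±(G) ≠ Z±_n(G) = Z_n(G)`. -/
theorem statement0 :
    ∃ (G : Type) (_ : CommGroup G), Countable G ∧ Infinite G ∧
      (∀ n m : ℕ, n < m →
        (∀ U : Set G, IsOpen[sgZariskiLe G n] U → IsOpen[sgZariskiLe G m] U) ∧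
        ∃ U : Set G, IsOpen[sgZariskiLe G m] U ∧ ¬ IsOpen[sgZariskiLe G n] U) ∧
      sgZariski G = gpZariski G ∧
      ∀ n : ℕ, gpZariski G ≠ gpZariskiLe G n ∧ gpZariskiLe G n = sgZariskiLe G n := by
  refine ⟨RatCircleSum, inferInstance,
    inferInstanceAs (Countable (ℕ →₀ AddCircle (1 : ℚ))),
    inferInstanceAs (Infinite (ℕ →₀ AddCircle (1 : ℚ))),
    fun n m hnm => ⟨?_, ?_⟩, ?_, fun n => ⟨?_, ?_⟩⟩
  · intro U hU
    rw [sgZariskiLe_eq_generateFrom] at hU ⊢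
    exact generateFrom_anti (zpowNeSets_mono hnm.le) U hU
  · rw [sgZariskiLe_eq_generateFrom, sgZariskiLe_eq_generateFrom]
    exact ⟨_, isOpen_generateFrom_of_mem ⟨m, 1, le_rfl, rfl⟩,
      not_isOpen_setOf_zpow_ne_one hnm⟩
  · rw [sgZariski_eq_generateFrom, gpZariski_eq_generateFrom]
  · intro heq
    refine not_isOpen_setOf_zpow_ne_one n.lt_succ_self ?_
    rw [← gpZariskiLe_eq_generateFrom, ← heq, gpZariski_eq_generateFrom]
    exact isOpen_generateFrom_of_mem (Set.mem_iUnion.2 ⟨n + 1, _, 1, le_rfl, rfl⟩)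
  · rw [gpZariskiLe_eq_generateFrom, sgZariskiLe_eq_generateFrom]
end

section
/- Let X be an infinite set and let G be a subgroup of Sym(X) with Sym_ω(X) ⊆ G. Then Z±_4(G) = Z±(G), and this topology equals the topology of pointwise convergence on G; in particular, Z±(G) is totally disconnected. -/
open Topology TopologicalSpace

/-- The topology of pointwise convergence on `Sym(X) = Equiv.Perm X`: the subspace topology
induced from the product space `X → X`, where `X` carries the discrete topology. -/
def permPtwise (X : Type*) : TopologicalSpace (Equiv.Perm X) :=
  TopologicalSpace.induced (fun (g : Equiv.Perm X) (x : X) => g x)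
    (@Pi.topologicalSpace X (fun _ => X) (fun _ => ⊥))

/-- The topology of pointwise convergence on a subgroup `G ≤ Sym(X)`. -/
def subPtwise {X : Type*} (G : Subgroup (Equiv.Perm X)) : TopologicalSpace ↥G :=
  TopologicalSpace.induced Subtype.val (permPtwise X)


/-!
Group polynomials are continuous in every topological group, so the Zariski topology is coarser
than every `T₁` group topology, the pointwise one in particular. Conversely, `x ↦ ⁅s, x t x⁻¹⁆`
is a polynomial of degree 4; taking for `s`, `t` transpositions with fresh points, finitely many
of the sets `{x | ¬Commute s (x t x⁻¹)}` cut out a neighbourhood of any `g₀` inside the cylinder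
`{g | g p = g₀ p}`, so the pointwise topology is coarser than `Z±_4`.
-/
open Equiv Function
open scoped commutatorElement

section Zariski

variable {G : Type*} [Group G]

lemma gpZariski_le_gpZariskiLe (n : ℕ) : gpZariski G ≤ gpZariskiLe G n :=
  generateFrom_anti fun _ ⟨a, l, _, hU⟩ => ⟨a, l, hU⟩

lemma continuous_gpEval [TopologicalSpace G] [IsTopologicalGroup G] (a : G)
    (l : List (Bool × G)) : Continuous fun x => gpEval x a l := by
  refine continuous_const.mul (continuous_list_prod l fun p _ => ?_)
  cases p.1 <;> simp only [Bool.false_eq_true, if_true, if_false] <;> fun_prop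

lemma le_gpZariski [t : TopologicalSpace G] [IsTopologicalGroup G] [T1Space G] :
    t ≤ gpZariski G :=
  le_generateFrom fun _ ⟨a, l, hU⟩ => hU ▸ isOpen_compl_singleton.preimage (continuous_gpEval a l)

lemma gpEval_eq_commutatorElement (s t x : G) :
    gpEval x s [(true, t), (false, s⁻¹), (true, t⁻¹), (false, 1)] = ⁅s, x * t * x⁻¹⁆ := by
  simp only [gpEval, List.map_cons, List.map_nil, List.prod_cons, List.prod_nil,
    commutatorElement_def, Bool.false_eq_true, if_true, if_false]
  group

lemma isOpen_gpZariskiLe_not_commute_conj (s t : G) :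
    IsOpen[gpZariskiLe G 4] {x | ¬Commute s (x * t * x⁻¹)} := by
  refine isOpen_generateFrom_of_mem ⟨s, [(true, t), (false, s⁻¹), (true, t⁻¹), (false, 1)],
    le_rfl, ?_⟩
  simp only [gpEval_eq_commutatorElement, Ne, commutatorElement_eq_one_iff_commute]

end Zariski

section Swap

variable {α : Type*} [DecidableEq α]

lemma Equiv.Perm.commute_swap_of_apply_eq {σ : Perm α} {a b : α} (ha : σ a = a)
    (hb : σ b = b) : Commute (swap a b) σ := by
  have h := swap_apply_apply σ a b
  rw [ha, hb, eq_mul_inv_iff_mul_eq] at h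
  exact h

lemma Equiv.not_commute_swap_swap {a b c : α} (hab : a ≠ b) (hac : a ≠ c) (hbc : b ≠ c) :
    ¬Commute (swap a b) (swap a c) := by
  intro h
  have h' := congr($(h.eq) a)
  simp only [Perm.mul_apply, swap_apply_left, swap_apply_of_ne_of_ne hab.symm hbc,
    swap_apply_of_ne_of_ne hac.symm hbc.symm] at h'
  exact hbc h'.symm

/-- Otherwise `(c d)` fixes `a`, so to avoid commuting with `(a bᵢ)` it must move all three `bᵢ`. -/
lemma Equiv.eq_or_eq_of_not_commute_swap {a c d b₁ b₂ b₃ : α} (h₁₂ : b₁ ≠ b₂) (h₁₃ : b₁ ≠ b₃)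
    (h₂₃ : b₂ ≠ b₃) (h₁ : ¬Commute (swap a b₁) (swap c d))
    (h₂ : ¬Commute (swap a b₂) (swap c d)) (h₃ : ¬Commute (swap a b₃) (swap c d)) :
    a = c ∨ a = d := by
  by_contra! had
  have moved : ∀ b, ¬Commute (swap a b) (swap c d) → b = c ∨ b = d := by
    intro b h
    by_contra! hbd
    exact h (Perm.commute_swap_of_apply_eq (swap_apply_of_ne_of_ne had.1 had.2)
      (swap_apply_of_ne_of_ne hbd.1 hbd.2))
  grind [moved _ h₁, moved _ h₂, moved _ h₃]

end Swap

section Pointwise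

variable {X : Type*} (G : Subgroup (Perm X))

lemma subPtwise_eq_induced [TopologicalSpace X] [DiscreteTopology X] :
    subPtwise G = induced (fun (g : G) (x : X) => (g : Perm X) x) Pi.topologicalSpace := by
  rw [subPtwise, permPtwise, induced_compose, DiscreteTopology.eq_bot (α := X)]
  rfl

attribute [local instance] subPtwise

lemma isEmbedding_subPtwise [TopologicalSpace X] [DiscreteTopology X] :
    IsEmbedding fun (g : G) (x : X) => (g : Perm X) x :=
  ⟨⟨subPtwise_eq_induced G⟩, fun _ _ h => Subtype.ext (Equiv.ext (congrFun h))⟩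

lemma isTopologicalGroup_subPtwise : IsTopologicalGroup G := by
  let _ : TopologicalSpace X := ⊥
  have : DiscreteTopology X := ⟨rfl⟩
  have hemb := isEmbedding_subPtwise G
  have happly : ∀ x : X, Continuous fun g : G => (g : Perm X) x :=
    fun x => (continuous_apply x).comp hemb.continuous
  have hev : Continuous fun p : G × X => (p.1 : Perm X) p.2 :=
    continuous_prod_of_discrete_right.2 happly
  refine { continuous_mul := ?_, continuous_inv := ?_ }
  · refine hemb.continuous_iff.2 (continuous_pi fun x => ?_)
    exact hev.comp (continuous_fst.prodMk ((happly x).comp continuous_snd))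
  · refine hemb.continuous_iff.2 (continuous_pi fun x => continuous_discrete_rng.2 fun y => ?_)
    convert (happly y).isOpen_preimage {x} (isOpen_discrete _) using 1
    ext g
    simp only [Set.mem_preimage, comp_apply, Subgroup.coe_inv, Set.mem_singleton_iff]
    exact Perm.inv_eq_iff_eq.trans eq_comm

lemma t2Space_subPtwise : T2Space G := by
  let _ : TopologicalSpace X := ⊥
  have : DiscreteTopology X := ⟨rfl⟩
  exact (isEmbedding_subPtwise G).t2Space

lemma totallyDisconnectedSpace_subPtwise : TotallyDisconnectedSpace G := by
  let _ : TopologicalSpace X := ⊥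
  have : DiscreteTopology X := ⟨rfl⟩
  exact (isEmbedding_subPtwise G).isTotallyDisconnected_range.mp
    (isTotallyDisconnected_of_totallyDisconnectedSpace _)

lemma subPtwise_le_gpZariski : subPtwise G ≤ gpZariski G :=
  have := isTopologicalGroup_subPtwise G
  have := t2Space_subPtwise G
  le_gpZariski

lemma le_subPtwise_of_isOpen (t : TopologicalSpace G)
    (h : ∀ p q : X, IsOpen[t] {g : G | (g : Perm X) p = q}) : t ≤ subPtwise G := by
  let _ : TopologicalSpace X := ⊥
  have : DiscreteTopology X := ⟨rfl⟩
  rw [subPtwise_eq_induced, ← continuous_iff_le_induced, continuous_pi_iff]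
  exact fun p => continuous_discrete_rng.2 (h p)

end Pointwise

section Cylinder

variable {X : Type*} [DecidableEq X] {G : Subgroup (Perm X)}

lemma swap_mem_of_finite_support_mem (hG : ∀ g : Perm X, {x : X | g x ≠ x}.Finite → g ∈ G)
    (a b : X) : swap a b ∈ G :=
  hG _ <| (Set.toFinite {a, b}).subset fun x hx => by
    by_contra! h
    simp only [Set.mem_insert_iff, Set.mem_singleton_iff, not_or] at h
    exact hx (swap_apply_of_ne_of_ne h.1 h.2)

lemma isOpen_gpZariskiLe_not_commute_swap (hswap : ∀ a b : X, swap a b ∈ G) (a b c d : X) :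
    IsOpen[gpZariskiLe G 4]
      {g : G | ¬Commute (swap a b) (swap ((g : Perm X) c) ((g : Perm X) d))} := by
  convert isOpen_gpZariskiLe_not_commute_conj (⟨swap a b, hswap a b⟩ : G) ⟨swap c d, hswap c d⟩
    using 4 with g
  simp only [commute_iff_eq, Subtype.ext_iff, Subgroup.coe_mul, Subgroup.coe_inv, swap_apply_apply]

/-- Around `g₀` with `g₀ p = q`, take fresh points `wⱼ, bᵢ`: at `g = g₀` the transposition
`(q bᵢ)` does not commute with the transposition of `g p` and `g (g₀⁻¹ wⱼ)`, and wherever this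
holds for all `i, j` it forces `q ∈ {g p, g (g₀⁻¹ wⱼ)}` for both `j`, hence `g p = q`. -/
lemma isOpen_gpZariskiLe_apply_eq [Infinite X] (hswap : ∀ a b : X, swap a b ∈ G) (p q : X) :
    IsOpen[gpZariskiLe G 4] {g : G | (g : Perm X) p = q} := by
  obtain ⟨w, hw, hwq⟩ : ∃ w : ℕ → X, Injective w ∧ ∀ n, w n ≠ q :=
    let e := (Set.finite_singleton q).infinite_compl.natEmbedding
    ⟨fun n => e n, fun _ _ h => e.injective (Subtype.ext h), fun n => (e n).2⟩
  let _ : TopologicalSpace G := gpZariskiLe G 4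
  let V : G → Set G := fun g₀ => ⋂ (j : Fin 2) (i : Fin 3),
    {g : G | ¬Commute (swap q (w (i + 2)))
      (swap ((g : Perm X) p) ((g : Perm X) ((g₀ : Perm X)⁻¹ (w j))))}
  refine isOpen_iff_forall_mem_open.2 fun g₀ hg₀ => ⟨V g₀, ?_, ?_, ?_⟩
  · intro g hg
    simp only [V, Set.mem_iInter, Set.mem_ofPred_eq] at hg
    have hq (j : Fin 2) : q = (g : Perm X) p ∨ q = (g : Perm X) ((g₀ : Perm X)⁻¹ (w j)) :=
      eq_or_eq_of_not_commute_swap (hw.ne (by decide)) (hw.ne (by decide)) (hw.ne (by decide))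
        (hg j 0) (hg j 1) (hg j 2)
    by_contra hgp
    have h01 := ((hq 0).resolve_left (Ne.symm hgp)).symm.trans ((hq 1).resolve_left (Ne.symm hgp))
    exact hw.ne (by decide : (0 : ℕ) ≠ 1) (by simpa using h01)
  · exact isOpen_iInter_of_finite fun j => isOpen_iInter_of_finite fun i =>
      isOpen_gpZariskiLe_not_commute_swap hswap _ _ _ _
  · simp only [V, Set.mem_iInter, Set.mem_ofPred_eq, Perm.coe_inv, apply_symm_apply, hg₀.out]
    exact fun j i =>
      not_commute_swap_swap (hwq _).symm (hwq _).symm (hw.ne (by omega : (i : ℕ) + 2 ≠ j))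

end Cylinder

/-- If `X` is infinite and `Sym_ω(X) ⊆ G ⊆ Sym(X)`, then `Z±_4(G) = Z±(G)` and this topology
is the topology of pointwise convergence on `G`; in particular `Z±(G)` is totally
disconnected. -/
theorem statement3 {X : Type*} [Infinite X] (G : Subgroup (Equiv.Perm X))
    (hG : ∀ g : Equiv.Perm X, {x : X | g x ≠ x}.Finite → g ∈ G) :
    gpZariskiLe ↥G 4 = gpZariski ↥G ∧ gpZariski ↥G = subPtwise G ∧
      @TotallyDisconnectedSpace ↥G (gpZariski ↥G) := by
  classical
  have hZ : gpZariski G ≤ gpZariskiLe G 4 := gpZariski_le_gpZariskiLe 4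
  have hP : subPtwise G ≤ gpZariski G := subPtwise_le_gpZariski G
  have hZ₄ : gpZariskiLe G 4 ≤ subPtwise G :=
    le_subPtwise_of_isOpen G _ (isOpen_gpZariskiLe_apply_eq (swap_mem_of_finite_support_mem hG))
  have hZP : gpZariski G = subPtwise G := le_antisymm (hZ.trans hZ₄) hP
  exact ⟨le_antisymm (hZ₄.trans hP) hZ, hZP, hZP ▸ totallyDisconnectedSpace_subPtwise G⟩
end

section
/- Let X be a set and let G be a subgroup of Sym(X) with no algebraicity. Then the semigroup Zariski topology Z(G) is hyperconnected. -/
open Topology TopologicalSpace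

/-- A subgroup `G ≤ Sym(X)` has no algebraicity if for every finite `S ⊆ X` and every
`q ∈ X \ S`, the set `{g q | g ∈ G, g fixes S pointwise}` is infinite. -/
def NoAlgebraicity {X : Type*} (G : Subgroup (Equiv.Perm X)) : Prop :=
  ∀ S : Finset X, ∀ q : X, q ∉ S →
    {a : X | ∃ g ∈ G, (∀ x ∈ S, g x = x) ∧ g q = a}.Infinite

/-- A topology is hyperconnected if any two nonempty open sets have nonempty intersection. -/
def Hyperconnected {Y : Type*} (t : TopologicalSpace Y) : Prop :=
  ∀ U V : Set Y, IsOpen[t] U → IsOpen[t] V → U.Nonempty → V.Nonempty → (U ∩ V).Nonempty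

/-! The witness `h ∈ G` is built by prescribing its values on finitely many points, one at a
time; no algebraicity lets each new value avoid any given finite set. For a finite set `𝔏` of
coefficients, the prescribed points form a forest under `z ↦ e (h z)` (`e ∈ 𝔏`), and fresh values
keep it a forest whose roots are never reached. After cancelling common innermost coefficients,
the traces computing `f h p` and `g h p` start at two distinct roots, so they end in different
trees; when one side is constant, the point the other trace must avoid is made a root. -/

open Equiv Set Relation

theorem map_sgEval {M N : Type*} [Monoid M] [Monoid N] (φ : M →* N) (x a : M) (l : List M) :
    φ (sgEval x a l) = sgEval (φ x) (φ a) (l.map φ) := by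
  simp [sgEval, map_list_prod, List.map_map, Function.comp_def]

theorem sgEval_nil {M : Type*} [Monoid M] (x a : M) : sgEval x a [] = a := by
  simp [sgEval]

theorem sgEval_concat {M : Type*} [Monoid M] (x a c : M) (l : List M) :
    sgEval x a (l ++ [c]) = sgEval x a l * (x * c) := by
  simp [sgEval, mul_assoc]

theorem sgEval_concat_apply {X : Type*} (h a c : Perm X) (l : List (Perm X)) (p : X) :
    sgEval h a (l ++ [c]) p = a ((l.map (h * ·)).prod (h (c p))) := by
  simp [sgEval, Perm.mul_apply]

theorem Subgroup.sgEval_ne_iff {M : Type*} [Group M] (H : Subgroup M) (x a b : H)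
    (l m : List H) :
    sgEval x a l ≠ sgEval x b m ↔
      sgEval (H.subtype x) (H.subtype a) (l.map H.subtype) ≠
        sgEval (H.subtype x) (H.subtype b) (m.map H.subtype) := by
  rw [ne_eq, ne_eq, ← H.subtype_injective.eq_iff, map_sgEval, map_sgEval]

theorem hyperconnected_generateFrom {Y : Type*} (s : Set (Set Y))
    (hs : ∀ F ⊆ s, F.Finite → (∀ U ∈ F, U.Nonempty) → (⋂₀ F).Nonempty) :
    Hyperconnected (generateFrom s) := by
  let := generateFrom s
  have hb := isTopologicalBasis_of_subbasis (t := generateFrom s) rfl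
  rintro U V hU hV ⟨u, hu⟩ ⟨v, hv⟩
  obtain ⟨_, ⟨F₁, ⟨hF₁, hF₁s⟩, rfl⟩, huF, hFU⟩ := hb.exists_subset_of_mem_open hu hU
  obtain ⟨_, ⟨F₂, ⟨hF₂, hF₂s⟩, rfl⟩, hvF, hFV⟩ := hb.exists_subset_of_mem_open hv hV
  have hne : ∀ W ∈ F₁ ∪ F₂, W.Nonempty := by
    rintro W (hW | hW)
    exacts [⟨u, huF W hW⟩, ⟨v, hvF W hW⟩]
  obtain ⟨w, hw⟩ := hs _ (union_subset hF₁s hF₂s) (hF₁.union hF₂) hne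
  rw [sInter_union] at hw
  exact ⟨w, hFU hw.1, hFV hw.2⟩

namespace NoAlgebraicity

variable {X : Type*} {G : Subgroup (Perm X)}

theorem infinite [Nonempty X] (hG : NoAlgebraicity G) : Infinite X :=
  infinite_univ_iff.mp <|
    (hG ∅ (Classical.arbitrary X) (Finset.notMem_empty _)).mono (subset_univ _)

theorem exists_eqOn_apply_notMem (hG : NoAlgebraicity G) {g : Perm X} (hg : g ∈ G)
    {A : Finset X} {q : X} (hq : q ∉ A) (B : Finset X) :
    ∃ g' ∈ G, EqOn g' g A ∧ g' q ∉ B := by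
  classical
  have hgq : g q ∉ A.image g := by simpa using hq
  obtain ⟨_, ⟨k, hk, hkfix, rfl⟩, hkB⟩ := (hG _ _ hgq).exists_notMem_finset B
  exact ⟨k * g, mul_mem hk hg, fun z hz => hkfix _ (Finset.mem_image_of_mem g hz), hkB⟩

end NoAlgebraicity

/-- A permutation whose values are committed only on `dom`. -/
structure Approx (X : Type*) where
  perm : Perm X
  roots : Finset X
  dom : Finset X

namespace Approx

variable {X : Type*}

instance : Preorder (Approx X) where
  le s t := s.roots ⊆ t.roots ∧ s.dom ⊆ t.dom ∧ EqOn t.perm s.perm s.dom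
  le_refl s := ⟨subset_rfl, subset_rfl, eqOn_refl _ _⟩
  le_trans _ _ _ hst htu := ⟨hst.1.trans htu.1, hst.2.1.trans htu.2.1,
    (htu.2.2.mono (Finset.coe_subset.2 hst.2.1)).trans hst.2.2⟩

theorem eqOn_of_le {s t : Approx X} (hst : s ≤ t) {h : Perm X} (hh : EqOn h t.perm t.dom) :
    EqOn h s.perm s.dom :=
  (hh.mono (Finset.coe_subset.2 hst.2.1)).trans hst.2.2

def Forces (s : Approx X) (P : Perm X → Prop) : Prop :=
  ∀ h : Perm X, EqOn h s.perm s.dom → P h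

theorem Forces.mono {s t : Approx X} (hst : s ≤ t) {P : Perm X → Prop} (hs : s.Forces P) :
    t.Forces P :=
  fun h hh => hs h (eqOn_of_le hst hh)

variable (G : Subgroup (Perm X)) (𝔏 : Finset (Perm X))

structure Generic (s : Approx X) : Prop where
  perm_mem : s.perm ∈ G
  roots_subset : s.roots ⊆ s.dom
  parent_unique : ∀ y ∈ s.dom, ∀ y' ∈ s.dom, ∀ e ∈ 𝔏, ∀ e' ∈ 𝔏,
    e (s.perm y) = e' (s.perm y') → y = y'
  notMem_roots : ∀ y ∈ s.dom, ∀ e ∈ 𝔏, e (s.perm y) ∉ s.roots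

def Child (s : Approx X) (y z : X) : Prop :=
  y ∈ s.dom ∧ z ∈ s.dom ∧ ∃ e ∈ 𝔏, z = e (s.perm y)

def Unreached (s : Approx X) (x : X) : Prop :=
  x ∉ s.dom ∧ ∀ y ∈ s.dom, ∀ e ∈ 𝔏, e (s.perm y) ≠ x

/-- If `c, d ∈ 𝔏` differ at only finitely many points, a point `c p ≠ d p` cannot be chosen
fresh, so all such points are made roots before any other value is prescribed. -/
def Reserves (R : Finset X) : Prop :=
  ∀ c ∈ 𝔏, ∀ d ∈ 𝔏, {p | c p ≠ d p}.Finite → ∀ p, c p ≠ d p → c p ∈ R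

variable {G 𝔏}

theorem Child.mono {s t : Approx X} (hst : s ≤ t) : Child 𝔏 s ≤ Child 𝔏 t := by
  rintro y z ⟨hy, hz, e, he, rfl⟩
  exact ⟨hst.2.1 hy, hst.2.1 hz, e, he, by rw [hst.2.2 hy]⟩

theorem mem_dom_of_reflTransGen {s : Approx X} {x z : X} (h : ReflTransGen (Child 𝔏 s) x z)
    (hx : x ∈ s.dom) : z ∈ s.dom := by
  rcases h.cases_tail with rfl | ⟨y, -, hy⟩
  exacts [hx, hy.2.1]

theorem Reserves.mono {R R' : Finset X} (hR : Reserves 𝔏 R) (hRR' : R ⊆ R') : Reserves 𝔏 R' :=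
  fun c hc d hd hfin p hp => hRR' (hR c hc d hd hfin p hp)

theorem exists_reserves (𝔏 : Finset (Perm X)) : ∃ R, Reserves 𝔏 R := by
  classical
  refine ⟨𝔏.biUnion fun c => 𝔏.biUnion fun d =>
    if hfin : {p | c p ≠ d p}.Finite then hfin.toFinset.image c else ∅, ?_⟩
  intro c hc d hd hfin p hp
  simp only [Finset.mem_biUnion]
  refine ⟨c, hc, d, hd, ?_⟩
  rw [dif_pos hfin]
  exact Finset.mem_image_of_mem c (hfin.mem_toFinset.2 hp)

theorem finite_setOf_not_unreached (s : Approx X) : {x | ¬Unreached 𝔏 s x}.Finite := by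
  refine (s.dom.finite_toSet.union
    (𝔏.finite_toSet.image2 (fun e y => e (s.perm y)) s.dom.finite_toSet)).subset ?_
  intro x hx
  simp only [Unreached, not_and_or, not_not, not_forall] at hx
  rcases hx with hx | ⟨y, hy, e, he, rfl⟩
  exacts [Or.inl hx, Or.inr ⟨e, he, y, hy, rfl⟩]

theorem exists_mem_unreached (s : Approx X) {Λ : Set X} (hΛ : Λ.Infinite) (c d : Perm X) :
    ∃ p ∈ Λ, Unreached 𝔏 s (c p) ∧ Unreached 𝔏 s (d p) := by
  have hB := s.finite_setOf_not_unreached (𝔏 := 𝔏)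
  obtain ⟨p, hpΛ, hp⟩ := hΛ.exists_notMem_finite
    ((hB.preimage c.injective.injOn).union (hB.preimage d.injective.injOn))
  simp only [mem_union, mem_preimage, not_or] at hp
  exact ⟨p, hpΛ, not_not.1 hp.1, not_not.1 hp.2⟩

namespace Generic

variable {s : Approx X}

theorem child_notMem_roots (hs : Generic G 𝔏 s) {y z : X} (h : Child 𝔏 s y z) :
    z ∉ s.roots := by
  obtain ⟨hy, -, e, he, rfl⟩ := h
  exact hs.notMem_roots y hy e he

theorem child_parent_unique (hs : Generic G 𝔏 s) {y y' z : X} (h : Child 𝔏 s y z)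
    (h' : Child 𝔏 s y' z) : y = y' := by
  obtain ⟨hy, -, e, he, rfl⟩ := h
  obtain ⟨hy', -, e', he', heq⟩ := h'
  exact hs.parent_unique y hy y' hy' e he e' he' heq

theorem eq_of_reflTransGen (hs : Generic G 𝔏 s) {x x' z : X} (hx : x ∈ s.roots)
    (hx' : x' ∈ s.roots) (h : ReflTransGen (Child 𝔏 s) x z)
    (h' : ReflTransGen (Child 𝔏 s) x' z) : x = x' := by
  induction h generalizing x' with
  | refl =>
    rcases h'.cases_tail with rfl | ⟨y', -, hy'⟩
    exacts [rfl, absurd hx (hs.child_notMem_roots hy')]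
  | tail _ hyz ih =>
    rcases h'.cases_tail with rfl | ⟨y', hxy', hy'⟩
    · exact absurd hx' (hs.child_notMem_roots hyz)
    · exact ih hx' (hs.child_parent_unique hy' hyz ▸ hxy')

theorem insert_roots [DecidableEq X] (hs : Generic G 𝔏 s) {x : X} (hx : x ∈ s.dom)
    (hunr : ∀ y ∈ s.dom, ∀ e ∈ 𝔏, e (s.perm y) ≠ x) :
    Generic G 𝔏 ⟨s.perm, insert x s.roots, s.dom⟩ where
  perm_mem := hs.perm_mem
  roots_subset := Finset.insert_subset hx hs.roots_subset
  parent_unique := hs.parent_unique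
  notMem_roots y hy e he h := by
    rcases Finset.mem_insert.1 h with h | h
    exacts [hunr y hy e he h, hs.notMem_roots y hy e he h]

variable (hG : NoAlgebraicity G) (h1 : 1 ∈ 𝔏)
include hG h1

theorem exists_insert [DecidableEq X] (hs : Generic G 𝔏 s) {t : X} (ht : t ∉ s.dom)
    (E : Finset X) :
    ∃ s' ≥ s, Generic G 𝔏 s' ∧ s'.dom = insert t s.dom ∧ ∀ e ∈ 𝔏, ∀ y ∈ E, e (s'.perm t) ≠ y := by
  set N : Finset X := s.dom ∪ s.dom.image s.perm ∪ E
  obtain ⟨g, hgG, hgs, hgt⟩ := hG.exists_eqOn_apply_notMem hs.perm_mem ht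
    ((𝔏 ×ˢ 𝔏 ×ˢ N).image fun q => q.1⁻¹ (q.2.1 q.2.2))
  have fresh : ∀ e ∈ 𝔏, ∀ e' ∈ 𝔏, ∀ y ∈ N, e (g t) ≠ e' y := by
    intro e he e' he' y hy hey
    exact hgt (Finset.mem_image.2 ⟨(e, e', y), by simp [he, he', hy], by simp [← hey]⟩)
  refine ⟨⟨g, s.roots, insert t s.dom⟩, ⟨subset_rfl, Finset.subset_insert _ _, hgs⟩,
    ⟨hgG, hs.roots_subset.trans (Finset.subset_insert _ _), ?_, ?_⟩, rfl,
    fun e he y hy => by simpa using fresh e he 1 h1 y (by simp [N, hy])⟩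
  · simp only [Finset.mem_insert]
    rintro y (rfl | hy) y' (rfl | hy') e he e' he' heq
    · rfl
    · rw [hgs hy'] at heq
      exact absurd heq (fresh e he e' he' _ (by simp [N, hy']))
    · rw [hgs hy] at heq
      exact absurd heq.symm (fresh e' he' e he _ (by simp [N, hy]))
    · rw [hgs hy, hgs hy'] at heq
      exact hs.parent_unique y hy y' hy' e he e' he' heq
  · simp only [Finset.mem_insert]
    rintro y (rfl | hy) e he hroot
    · exact fresh e he 1 h1 _
        (Finset.mem_union_left _ (Finset.mem_union_left _ (hs.roots_subset hroot))) (by simp)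
    · rw [hgs hy] at hroot
      exact hs.notMem_roots y hy e he hroot

theorem exists_mem_dom (hs : Generic G 𝔏 s) (t : X) :
    ∃ s' ≥ s, Generic G 𝔏 s' ∧ t ∈ s'.dom := by
  classical
  by_cases ht : t ∈ s.dom
  · exact ⟨s, le_rfl, hs, ht⟩
  · obtain ⟨s', hss', hs', hdom, -⟩ := hs.exists_insert hG h1 ht ∅
    exact ⟨s', hss', hs', hdom ▸ Finset.mem_insert_self t _⟩

theorem exists_subset_roots (hs : Generic G 𝔏 s) (S : Finset X)
    (hS : ∀ x ∈ S, Unreached 𝔏 s x) : ∃ s' ≥ s, Generic G 𝔏 s' ∧ S ⊆ s'.roots := by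
  classical
  induction S using Finset.induction_on generalizing s with
  | empty => exact ⟨s, le_rfl, hs, Finset.empty_subset _⟩
  | insert x S hxS ih =>
    obtain ⟨s₁, hss₁, hs₁, hdom, hfresh⟩ :=
      hs.exists_insert hG h1 (hS x (Finset.mem_insert_self x S)).1 (insert x S)
    have hunr : ∀ x' ∈ insert x S, ∀ y ∈ s₁.dom, ∀ e ∈ 𝔏, e (s₁.perm y) ≠ x' := by
      intro x' hx' y hy e he
      rw [hdom, Finset.mem_insert] at hy
      rcases hy with rfl | hy
      · exact hfresh e he x' hx'
      · rw [hss₁.2.2 hy]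
        exact (hS x' hx').2 y hy e he
    have hx₁ : x ∈ s₁.dom := hdom ▸ Finset.mem_insert_self x _
    obtain ⟨s₂, hs₁₂, hs₂, hS₂⟩ := ih (s := ⟨s₁.perm, insert x s₁.roots, s₁.dom⟩)
      (hs₁.insert_roots hx₁ (hunr x (Finset.mem_insert_self x S))) fun x' hx' =>
        ⟨by rw [hdom, Finset.mem_insert, not_or]
            exact ⟨ne_of_mem_of_not_mem hx' hxS, (hS x' (Finset.mem_insert_of_mem hx')).1⟩,
          hunr x' (Finset.mem_insert_of_mem hx')⟩
    have hs₁₂' : s₁ ≤ ⟨s₁.perm, insert x s₁.roots, s₁.dom⟩ :=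
      ⟨Finset.subset_insert _ _, subset_rfl, eqOn_refl _ _⟩
    exact ⟨s₂, hss₁.trans (hs₁₂'.trans hs₁₂), hs₂,
      Finset.insert_subset (hs₁₂.1 (Finset.mem_insert_self x _)) hS₂⟩

theorem exists_walk {L : List (Perm X)} (hL : ∀ e ∈ L, e ∈ 𝔏) (hs : Generic G 𝔏 s) {z : X}
    (hz : z ∈ s.dom) :
    ∃ s' ≥ s, Generic G 𝔏 s' ∧ ∃ z', ReflTransGen (Child 𝔏 s') z z' ∧
      s'.Forces fun h => (L.map (h * ·)).prod (h z) = h z' := by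
  induction L with
  | nil => exact ⟨s, le_rfl, hs, z, .refl, fun h _ => rfl⟩
  | cons e L ih =>
    obtain ⟨s₁, hss₁, hs₁, z₁, hzz₁, hforce₁⟩ :=
      ih fun e' he' => hL e' (List.mem_cons_of_mem e he')
    obtain ⟨s₂, hs₁₂, hs₂, ht⟩ := hs₁.exists_mem_dom hG h1 (e (s₁.perm z₁))
    have hz₁ : z₁ ∈ s₁.dom := mem_dom_of_reflTransGen hzz₁ (hss₁.2.1 hz)
    refine ⟨s₂, hss₁.trans hs₁₂, hs₂, e (s₁.perm z₁),
      (ReflTransGen.mono (Child.mono hs₁₂) _ _ hzz₁).tail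
        ⟨hs₁₂.2.1 hz₁, ht, e, hL e List.mem_cons_self, by rw [hs₁₂.2.2 hz₁]⟩, fun h hh => ?_⟩
    have hh₁ := eqOn_of_le hs₁₂ hh
    simp only [List.map_cons, List.prod_cons, Perm.mul_apply]
    rw [hforce₁ h hh₁, hh₁ hz₁]

theorem exists_roots_of_ne (hs : Generic G 𝔏 s) (hR : Reserves 𝔏 s.roots) {c d : Perm X}
    (hc : c ∈ 𝔏) (hd : d ∈ 𝔏) (hcd : c ≠ d) :
    ∃ p, c p ≠ d p ∧ ∃ s' ≥ s, Generic G 𝔏 s' ∧ c p ∈ s'.roots ∧ d p ∈ s'.roots := by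
  classical
  by_cases hfin : {p | c p ≠ d p}.Finite
  · obtain ⟨p, hp⟩ : ∃ p, c p ≠ d p := by
      by_contra! h
      exact hcd (Equiv.ext h)
    refine ⟨p, hp, s, le_rfl, hs, hR c hc d hd hfin p hp, hR d hd c hc ?_ p hp.symm⟩
    simpa only [ne_comm] using hfin
  · obtain ⟨p, hp, hcp, hdp⟩ := s.exists_mem_unreached (𝔏 := 𝔏) hfin c d
    obtain ⟨s', hss', hs', hroots⟩ := hs.exists_subset_roots hG h1 {c p, d p}
      (by simp [hcp, hdp])
    exact ⟨p, hp, s', hss', hs', hroots (by simp), hroots (by simp)⟩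

theorem exists_forces_const_ne [Infinite X] (hs : Generic G 𝔏 s) (a b d : Perm X)
    {M : List (Perm X)} (hM : ∀ e ∈ M, e ∈ 𝔏) :
    ∃ s' ≥ s, Generic G 𝔏 s' ∧ s'.Forces fun h => sgEval h a [] ≠ sgEval h b (M ++ [d]) := by
  classical
  obtain ⟨p, -, hp₁, hp₂⟩ := s.exists_mem_unreached (𝔏 := 𝔏) infinite_univ (b⁻¹ * a) d
  obtain ⟨s₁, hss₁, hs₁, hroots⟩ := hs.exists_subset_roots hG h1 {(b⁻¹ * a) p, d p}
    (by simpa only [Finset.mem_insert, Finset.mem_singleton, forall_eq_or_imp, forall_eq]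
      using ⟨hp₁, hp₂⟩)
  have hdp : d p ∈ s₁.dom :=
    hs₁.roots_subset (hroots (Finset.mem_insert_of_mem (Finset.mem_singleton_self _)))
  obtain ⟨s₂, hs₁₂, hs₂, z, hdz, hforce⟩ := hs₁.exists_walk hG h1 hM hdp
  have hz : z ∈ s₂.dom := mem_dom_of_reflTransGen hdz (hs₁₂.2.1 hdp)
  refine ⟨s₂, hss₁.trans hs₁₂, hs₂, fun h hh heq => ?_⟩
  have key : a p = b (h z) := by
    simpa [sgEval_nil, sgEval_concat_apply, hforce h hh] using congrArg (· p) heq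
  apply hs₂.notMem_roots z hz 1 h1
  have hhz : h z = (b⁻¹ * a) p := Perm.eq_inv_iff_eq.2 key.symm
  rw [Perm.one_apply, ← hh hz, hhz]
  exact hs₁₂.1 (hroots (Finset.mem_insert_self _ _))

theorem exists_forces_ne_of_ne (hs : Generic G 𝔏 s) (hR : Reserves 𝔏 s.roots)
    {a b c d : Perm X} (hab : b⁻¹ * a ∈ 𝔏) (hc : c ∈ 𝔏) (hd : d ∈ 𝔏) (hcd : c ≠ d)
    {L M : List (Perm X)} (hL : ∀ e ∈ L, e ∈ 𝔏) (hM : ∀ e ∈ M, e ∈ 𝔏) :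
    ∃ s' ≥ s, Generic G 𝔏 s' ∧
      s'.Forces fun h => sgEval h a (L ++ [c]) ≠ sgEval h b (M ++ [d]) := by
  obtain ⟨p, hp, s₁, hss₁, hs₁, hcp, hdp⟩ := hs.exists_roots_of_ne hG h1 hR hc hd hcd
  obtain ⟨s₂, hs₁₂, hs₂, z, hcz, hforce⟩ := hs₁.exists_walk hG h1 hL (hs₁.roots_subset hcp)
  obtain ⟨s₃, hs₂₃, hs₃, z', hdz', hforce'⟩ :=
    hs₂.exists_walk hG h1 hM (hs₁₂.2.1 (hs₁.roots_subset hdp))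
  have hz : z ∈ s₂.dom := mem_dom_of_reflTransGen hcz (hs₁₂.2.1 (hs₁.roots_subset hcp))
  have hz' : z' ∈ s₃.dom :=
    mem_dom_of_reflTransGen hdz' (hs₂₃.2.1 (hs₁₂.2.1 (hs₁.roots_subset hdp)))
  have hzz' : z ≠ z' := by
    rintro rfl
    exact hp (hs₃.eq_of_reflTransGen (hs₂₃.1 (hs₁₂.1 hcp)) (hs₂₃.1 (hs₁₂.1 hdp))
      (ReflTransGen.mono (Child.mono hs₂₃) _ _ hcz) hdz')
  refine ⟨s₃, hss₁.trans (hs₁₂.trans hs₂₃), hs₃, fun h hh heq => hzz' ?_⟩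
  have key : a (h z) = b (h z') := by
    simpa [sgEval_concat_apply, hforce h (eqOn_of_le hs₂₃ hh), hforce' h hh]
      using congrArg (· p) heq
  refine hs₃.parent_unique z (hs₂₃.2.1 hz) z' hz' (b⁻¹ * a) hab 1 h1 ?_
  rw [← hh (hs₂₃.2.1 hz), ← hh hz']
  exact Perm.inv_eq_iff_eq.2 key

theorem exists_forces_sgEval_ne [Infinite X] {a b : Perm X} (hab : b⁻¹ * a ∈ 𝔏)
    {L M : List (Perm X)} (hL : ∀ e ∈ L, e ∈ 𝔏) (hM : ∀ e ∈ M, e ∈ 𝔏)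
    (hne : ∃ v, sgEval v a L ≠ sgEval v b M) (hs : Generic G 𝔏 s) (hR : Reserves 𝔏 s.roots) :
    ∃ s' ≥ s, Generic G 𝔏 s' ∧ s'.Forces fun h => sgEval h a L ≠ sgEval h b M := by
  induction L using List.reverseRecOn generalizing M with
  | nil =>
    rcases M.eq_nil_or_concat' with rfl | ⟨M, d, rfl⟩
    · obtain ⟨v, hv⟩ := hne
      exact ⟨s, le_rfl, hs, fun h _ => by simpa only [sgEval_nil] using hv⟩
    · exact hs.exists_forces_const_ne hG h1 a b d fun e he => hM e (by simp [he])
  | append_singleton L c ih =>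
    have hL' : ∀ e ∈ L, e ∈ 𝔏 := fun e he => hL e (by simp [he])
    have hc : c ∈ 𝔏 := hL c (by simp)
    rcases M.eq_nil_or_concat' with rfl | ⟨M, d, rfl⟩
    · obtain ⟨s', hss', hs', hforce⟩ := hs.exists_forces_const_ne hG h1 b a c hL'
      exact ⟨s', hss', hs', fun h hh => (hforce h hh).symm⟩
    have hM' : ∀ e ∈ M, e ∈ 𝔏 := fun e he => hM e (by simp [he])
    by_cases hcd : c = d
    · subst hcd
      simp only [sgEval_concat, ne_eq, mul_left_inj] at hne ⊢
      exact ih hL' hM' hne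
    · exact hs.exists_forces_ne_of_ne hG h1 hR hab hc (hM d (by simp)) hcd hL' hM'

end Generic

end Approx

namespace NoAlgebraicity

open Approx

variable {X : Type*} {G : Subgroup (Perm X)}

theorem exists_forall_sgEval_ne [Infinite X] (hG : NoAlgebraicity G) {ι : Type*}
    (Q : Finset ι) (a b : ι → Perm X) (L M : ι → List (Perm X))
    (hQ : ∀ i ∈ Q, ∃ v, sgEval v (a i) (L i) ≠ sgEval v (b i) (M i)) :
    ∃ h ∈ G, ∀ i ∈ Q, sgEval h (a i) (L i) ≠ sgEval h (b i) (M i) := by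
  classical
  set 𝔏 : Finset (Perm X) :=
    insert 1 (Q.biUnion fun i => insert ((b i)⁻¹ * a i) ((L i).toFinset ∪ (M i).toFinset))
  have h1 : (1 : Perm X) ∈ 𝔏 := Finset.mem_insert_self _ _
  have hmem : ∀ i ∈ Q, (b i)⁻¹ * a i ∈ 𝔏 ∧ (∀ e ∈ L i, e ∈ 𝔏) ∧ ∀ e ∈ M i, e ∈ 𝔏 := by
    intro i hi
    have hsub : insert ((b i)⁻¹ * a i) ((L i).toFinset ∪ (M i).toFinset) ⊆ 𝔏 :=
      fun e he => Finset.mem_insert_of_mem (Finset.mem_biUnion.2 ⟨i, hi, he⟩)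
    exact ⟨hsub (Finset.mem_insert_self _ _), fun e he => hsub (by simp [he]),
      fun e he => hsub (by simp [he])⟩
  obtain ⟨R, hR⟩ := exists_reserves 𝔏
  have hs₀ : Generic G 𝔏 ⟨1, ∅, ∅⟩ := ⟨one_mem G, subset_rfl, by simp, by simp⟩
  obtain ⟨s, -, hs, hRs⟩ :=
    hs₀.exists_subset_roots hG h1 R fun x _ => ⟨Finset.notMem_empty x, by simp⟩
  suffices ∀ Q' ⊆ Q, ∃ s' ≥ s, Generic G 𝔏 s' ∧
      ∀ i ∈ Q', s'.Forces fun h => sgEval h (a i) (L i) ≠ sgEval h (b i) (M i) by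
    obtain ⟨s', -, hs', hforce⟩ := this Q subset_rfl
    exact ⟨s'.perm, hs'.perm_mem, fun i hi => hforce i hi _ (eqOn_refl _ _)⟩
  intro Q' hQ'
  induction Q' using Finset.induction_on with
  | empty => exact ⟨s, le_rfl, hs, by simp⟩
  | insert i Q' _ ih =>
    obtain ⟨s₁, hss₁, hs₁, hforce₁⟩ := ih ((Finset.subset_insert i Q').trans hQ')
    have hi := hQ' (Finset.mem_insert_self i Q')
    obtain ⟨hab, hL, hM⟩ := hmem i hi
    obtain ⟨s₂, hs₁₂, hs₂, hforce₂⟩ :=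
      hs₁.exists_forces_sgEval_ne hG h1 hab hL hM (hQ i hi) ((hR.mono hRs).mono hss₁.1)
    exact ⟨s₂, hss₁.trans hs₁₂, hs₂, (Finset.forall_mem_insert _ _ _).2
      ⟨hforce₂, fun j hj => (hforce₁ j hj).mono hs₁₂⟩⟩

end NoAlgebraicity

/-- If `G` is a subgroup of `Sym(X)` with no algebraicity, then the semigroup Zariski
topology `Z(G)` is hyperconnected. -/
theorem statement4 {X : Type*} (G : Subgroup (Equiv.Perm X)) (h : NoAlgebraicity G) :
    Hyperconnected (sgZariski ↥G) := by
  rcases isEmpty_or_nonempty X with hX | hX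
  · rintro U V - - ⟨u, hu⟩ ⟨v, hv⟩
    exact ⟨u, hu, Subsingleton.elim v u ▸ hv⟩
  have := h.infinite
  refine hyperconnected_generateFrom _ fun F hFS hF hFne => ?_
  choose! a l b m hU using fun U (hUF : U ∈ F) => hFS hUF
  obtain ⟨g, hgG, hg⟩ := h.exists_forall_sgEval_ne hF.toFinset (G.subtype ∘ a) (G.subtype ∘ b)
    (fun U => (l U).map G.subtype) (fun U => (m U).map G.subtype) fun U hUF => by
      obtain ⟨v, hv⟩ := hFne U (hF.mem_toFinset.1 hUF)
      rw [hU U (hF.mem_toFinset.1 hUF)] at hv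
      exact ⟨G.subtype v, (G.sgEval_ne_iff _ _ _ _ _).1 hv⟩
  refine ⟨⟨g, hgG⟩, fun U hUF => ?_⟩
  rw [hU U hUF]
  exact (G.sgEval_ne_iff _ _ _ _ _).2 (hg U (hF.mem_toFinset.2 hUF))
end

section
/- Let G be a group of cardinality ℵ₁ such that (i) for every subset A of G of cardinality ℵ₁ we have A^{10120} = G, i.e., every element of G is a product of 10120 elements of A, and (ii) for every countable subgroup H of G there exists g ∈ G with H ∩ gHg^{-1} = {1}. Then every T1 topology on G for which the multiplication map G × G → G is continuous is the discrete topology. -/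
/-!
If the topology is not discrete, no neighbourhood `V` of `1` is countable: otherwise the countable
subgroup `H` generated by `V` has a conjugate with `H ∩ g⁻¹Hg = {1}`, and this intersection is a
neighbourhood of `1`. So every neighbourhood of `1` has cardinality `ℵ₁`, and its `10120`-fold
products cover `G`. But continuity of multiplication gives a neighbourhood of `1` whose
`10120`-fold products avoid a given `g ≠ 1`, as `G \ {g}` is open by `T1`.
-/

open Topology Filter Cardinal

theorem Subgroup.countable_closure {G : Type*} [Group G] {s : Set G} (hs : s.Countable) :
    Countable (Subgroup.closure s) := by
  have := hs.to_subtype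
  rw [FreeGroup.closure_eq_range]
  exact (Set.countable_range (FreeGroup.lift ((↑) : s → G))).to_subtype

theorem exists_mem_nhds_one_ofFn_prod_mem {M : Type*} [Monoid M] [TopologicalSpace M]
    [ContinuousMul M] (n : ℕ) {U : Set M} (hU : U ∈ 𝓝 1) :
    ∃ V ∈ 𝓝 (1 : M), ∀ f : Fin n → M, (∀ i, f i ∈ V) → (List.ofFn f).prod ∈ U := by
  have hcont : Continuous fun f : Fin n → M => (List.ofFn f).prod := by
    simp only [List.ofFn_eq_map]
    exact continuous_list_prod _ fun i _ => continuous_apply i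
  have hpre : (fun f : Fin n → M => (List.ofFn f).prod) ⁻¹' U ∈ 𝓝 (fun _ => 1) :=
    hcont.continuousAt.preimage_mem_nhds (by simpa using hU)
  rw [nhds_pi, Filter.mem_pi'] at hpre
  obtain ⟨I, V, hV, hsub⟩ := hpre
  exact ⟨⋂ i, V i, iInter_mem.2 hV, fun f hf =>
    hsub fun i _ => Set.mem_iInter.1 (hf i) i⟩

section

variable {G : Type*} [Group G] [TopologicalSpace G] [ContinuousMul G]

theorem discreteTopology_of_mem_nhds_one_of_inf_conj_trivial (H : Subgroup G)
    (hH : (H : Set G) ∈ 𝓝 1) (g : G) (hg : ∀ x ∈ H, g * x * g⁻¹ ∈ H → x = 1) :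
    DiscreteTopology G := by
  have hconj : Continuous fun x : G => g * x * g⁻¹ := by fun_prop
  have hconjH : (fun x : G => g * x * g⁻¹) ⁻¹' H ∈ 𝓝 1 :=
    hconj.continuousAt.preimage_mem_nhds (by simpa using hH)
  have hone : ({1} : Set G) ∈ 𝓝 1 :=
    mem_of_superset (inter_mem hH hconjH) fun x ⟨hx, hgx⟩ => hg x hx hgx
  exact discreteTopology_of_isOpen_singleton_one <| isOpen_iff_mem_nhds.2 fun _ h => h ▸ hone

theorem discreteTopology_of_countable_mem_nhds_one
    (hmal : ∀ H : Subgroup G, Countable H → ∃ g : G, ∀ x ∈ H, g * x * g⁻¹ ∈ H → x = 1)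
    {V : Set G} (hV : V ∈ 𝓝 1) (hVc : V.Countable) : DiscreteTopology G := by
  obtain ⟨g, hg⟩ := hmal _ (Subgroup.countable_closure hVc)
  exact discreteTopology_of_mem_nhds_one_of_inf_conj_trivial _
    (mem_of_superset hV Subgroup.subset_closure) g hg

end

/-- Let `G` be a group of cardinality `ℵ₁` such that (i) every subset `A` of cardinality `ℵ₁`
satisfies `A^10120 = G`, and (ii) every countable subgroup `H` admits `g ∈ G` with
`H ∩ gHg⁻¹ = {1}`. Then every `T1` topology on `G` with continuous multiplication is
discrete. -/
theorem statement7 (G : Type*) [Group G] (hcard : Cardinal.mk G = Cardinal.aleph 1)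
    (hShelah : ∀ A : Set G, Cardinal.mk A = Cardinal.aleph 1 → ∀ g : G,
      ∃ f : Fin 10120 → G, (∀ i, f i ∈ A) ∧ (List.ofFn f).prod = g)
    (hmal : ∀ H : Subgroup G, Countable ↥H →
      ∃ g : G, ∀ x : G, x ∈ H → g * x * g⁻¹ ∈ H → x = 1)
    (t : TopologicalSpace G) (hT1 : @T1Space G t)
    (hmul : @Continuous (G × G) G (@instTopologicalSpaceProd G G t t) t
      (fun p => p.1 * p.2)) :
    t = ⊥ := by
  let := t
  have : ContinuousMul G := ⟨hmul⟩
  have : Nontrivial G := by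
    rw [← one_lt_iff_nontrivial, hcard]
    exact one_lt_aleph0.trans aleph0_lt_aleph_one
  by_contra hne
  obtain ⟨g, hg⟩ := exists_ne (1 : G)
  obtain ⟨V, hV, hVprod⟩ :=
    exists_mem_nhds_one_ofFn_prod_mem 10120 (compl_singleton_mem_nhds hg.symm)
  have hVuncountable : ¬ V.Countable := fun hVc =>
    hne (discreteTopology_of_countable_mem_nhds_one hmal hV hVc).eq_bot
  have hVcard : #V = ℵ₁ := le_antisymm (hcard ▸ mk_set_le V)
    (aleph_one_le_iff.2 (lt_of_not_ge (mt le_aleph0_iff_set_countable.1 hVuncountable)))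
  obtain ⟨f, hfV, hf⟩ := hShelah V hVcard g
  exact hVprod f hfV hf
end

section
/- Let X be an infinite set, let τ be a topology on Sym(X) for which the multiplication map Sym(X) × Sym(X) → Sym(X) is continuous, and let x ∈ X. Then the set U_{x,x} = {f ∈ Sym(X) : f(x) = x} is τ-open if and only if it is τ-closed. -/
/-!
An open subgroup is closed, so only "closed ⇒ open" needs an argument. Let `H` be the stabilizer
of `x`, assumed closed, and `y ≠ x`. Continuity of multiplication at `(1, swap x y)` gives open
sets `A ∋ 1` and `B ∋ swap x y` with `A * B` disjoint from `H`. Hence `Z = B • x` and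
`W = A⁻¹ • x` are disjoint subsets of `X`.

The sets `Y ⊆ X` for which `{f | f x ∈ Y}` is open are closed under intersections and under
translates `g • Y`, and `Z` is one of them. If `Zᶜ` is as large as `X`, some permutation `g`
fixes `y` and moves `Z \ {y}` into `Zᶜ`. Then `Z ∩ g • Z = {y}`, so `{y}` is one of these sets,
hence so is `{x}`, which means that `H` is open. The same holds for `W` once the topology is
transported by inversion, since this swaps left and right multiplication and preserves `H`. If
neither case applies, both `Zᶜ` and `Wᶜ` are smaller than the infinite set `X`, so `Z` and `W`
cannot be disjoint.
-/

open Topology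
open Cardinal Equiv Pointwise MulAction

section Combinatorics

variable {X : Type*}

lemma exists_perm_mapsTo_of_disjoint_of_mk_le {s t : Set X} (hst : Disjoint s t)
    (hcard : #s ≤ #t) : ∃ g : Perm X, Set.MapsTo g s t ∧ ∀ a ∉ s ∪ t, g a = a := by
  classical
  obtain ⟨j⟩ := hcard
  set u := Set.range fun a : s => (j a : X)
  have hut : u ⊆ t := Set.range_subset_iff.2 fun b => (j b).2
  have hsu : Disjoint s u := hst.mono_right hut
  let e : s ≃ u := Equiv.ofInjective _ (Subtype.val_injective.comp j.injective)
  let σ : Perm ↥(s ∪ u) := (Equiv.Set.union hsu).trans <|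
    (e.sumCongr e.symm).trans <| (Equiv.sumComm u s).trans (Equiv.Set.union hsu).symm
  refine ⟨Perm.ofSubtype σ, fun a ha => ?_, fun a ha => ?_⟩
  · have hunion : Equiv.Set.union hsu ⟨a, Or.inl ha⟩ = Sum.inl ⟨a, ha⟩ :=
      Equiv.Set.union_apply_left hsu ha
    rw [Perm.ofSubtype_apply_of_mem σ (Or.inl ha)]
    simp only [σ, e, Equiv.trans_apply, hunion, Equiv.sumCongr_apply, Sum.map_inl,
      Equiv.sumComm_apply, Sum.swap_inl, Equiv.Set.union_symm_apply_right]
    exact (j ⟨a, ha⟩).2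
  · exact Perm.ofSubtype_apply_of_not_mem σ fun h => ha (h.imp id (hut ·))

lemma singleton_of_mk_diff_le_mk_compl (P : Set X → Prop)
    (hinter : ∀ {Y₁ Y₂}, P Y₁ → P Y₂ → P (Y₁ ∩ Y₂)) (hsmul : ∀ (g : Perm X) {Y}, P Y → P (g • Y))
    {Z : Set X} (hZ : P Z) {z : X} (hz : z ∈ Z) (hcard : #↥(Z \ {z}) ≤ #↥Zᶜ) (x : X) :
    P {x} := by
  classical
  obtain ⟨g, hmaps, hfix⟩ := exists_perm_mapsTo_of_disjoint_of_mk_le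
    (disjoint_compl_right.mono_left Set.sdiff_subset) hcard
  have hgz : g z = z := hfix z (by simp [hz])
  have hinter_eq : Z ∩ g • Z = {z} := by
    refine Set.eq_singleton_iff_unique_mem.2 ⟨⟨hz, z, hz, hgz⟩, ?_⟩
    rintro _ ⟨hcZ, a, haZ, rfl⟩
    by_contra hne
    have ha : a ≠ z := fun h => hne (h ▸ hgz)
    exact hmaps ⟨haZ, ha⟩ hcZ
  have hPz : P {z} := hinter_eq ▸ hinter hZ (hsmul g hZ)
  simpa using hsmul (swap z x) hPz

lemma Set.inter_nonempty_of_mk_compl_lt [Infinite X] {s t : Set X} (hs : #↥sᶜ < #X)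
    (ht : #↥tᶜ < #X) : (s ∩ t).Nonempty := by
  by_contra h
  have hcover : sᶜ ∪ tᶜ = Set.univ := by
    rw [← Set.compl_inter, Set.not_nonempty_iff_eq_empty.1 h, Set.compl_empty]
  have : #X ≤ #↥sᶜ + #↥tᶜ := by
    simpa [hcover] using Cardinal.mk_union_le sᶜ tᶜ
  exact this.not_gt (add_lt_of_lt (aleph0_le_mk X) hs ht)

end Combinatorics

section Topology

variable {G X : Type*} [Group G] [MulAction G X]

lemma preimage_smul_image_eq_mul_stabilizer (x : X) (B : Set G) :
    (fun g : G => g • x) ⁻¹' ((fun g : G => g • x) '' B) = B * (stabilizer G x : Set G) := by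
  ext g
  simp only [Set.mem_preimage, Set.mem_image, Set.mem_mul, SetLike.mem_coe, mem_stabilizer_iff]
  constructor
  · rintro ⟨b, hb, hbg⟩
    exact ⟨b, hb, b⁻¹ * g, by rw [mul_smul, ← hbg, inv_smul_smul], mul_inv_cancel_left b g⟩
  · rintro ⟨b, hb, s, hs, rfl⟩
    exact ⟨b, hb, by rw [mul_smul, hs]⟩

variable [TopologicalSpace G] [SeparatelyContinuousMul G]

lemma IsOpen.preimage_smul_image (x : X) {B : Set G} (hB : IsOpen B) :
    IsOpen ((fun g : G => g • x) ⁻¹' ((fun g : G => g • x) '' B)) := by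
  rw [preimage_smul_image_eq_mul_stabilizer]
  exact hB.mul_right

lemma IsOpen.preimage_smul_smul_set {x : X} {Y : Set X}
    (hY : IsOpen ((fun g : G => g • x) ⁻¹' Y)) (a : G) :
    IsOpen ((fun g : G => g • x) ⁻¹' (a • Y)) := by
  have : (fun g : G => g • x) ⁻¹' (a • Y) = (a⁻¹ * ·) ⁻¹' ((fun g : G => g • x) ⁻¹' Y) := by
    ext g
    simp [Set.mem_smul_set_iff_inv_smul_mem, mul_smul]
  rw [this]
  exact hY.preimage (continuous_const_mul _)

end Topology

lemma separatelyContinuousMul_coinduced_inv {G : Type*} [Group G] [t : TopologicalSpace G]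
    [SeparatelyContinuousMul G] : @SeparatelyContinuousMul G (t.coinduced (·⁻¹)) _ := by
  refine @SeparatelyContinuousMul.mk G (t.coinduced (·⁻¹)) _ (fun {a} => ?_) (fun {a} => ?_)
  · refine continuous_coinduced_dom.2 ?_
    have : (a * ·) ∘ (·⁻¹) = (·⁻¹) ∘ (· * a⁻¹) := funext fun f => by simp
    rw [this]
    exact @Continuous.comp _ _ _ t t (t.coinduced _) _ _ continuous_coinduced_rng
      (continuous_mul_const _)
  · refine continuous_coinduced_dom.2 ?_
    have : (· * a) ∘ (·⁻¹) = (·⁻¹) ∘ (a⁻¹ * ·) := funext fun f => by simp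
    rw [this]
    exact @Continuous.comp _ _ _ t t (t.coinduced _) _ _ continuous_coinduced_rng
      (continuous_const_mul _)

lemma isOpen_stabilizer_or_mk_compl_lt {X : Type*} [TopologicalSpace (Perm X)]
    [SeparatelyContinuousMul (Perm X)] (x : X) {B : Set (Perm X)} (hB : IsOpen B)
    (hne : B.Nonempty) :
    IsOpen (stabilizer (Perm X) x : Set (Perm X)) ∨
      #↥((fun g : Perm X => g • x) '' B)ᶜ < #X := by
  refine (lt_or_ge _ _).symm.imp_left fun hbig => ?_
  obtain ⟨f, hf⟩ := hne
  exact singleton_of_mk_diff_le_mk_compl (fun Y => IsOpen ((fun g : Perm X => g • x) ⁻¹' Y))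
    (fun h₁ h₂ => h₁.inter h₂) (fun g _ hY => hY.preimage_smul_smul_set g)
    (hB.preimage_smul_image x) (Set.mem_image_of_mem _ hf) ((mk_set_le _).trans hbig) x

/-- Let `X` be infinite, `t` a topology on `Sym(X)` with continuous multiplication, and
`x ∈ X`. Then `U_{x,x} = {f | f x = x}` is `t`-open iff it is `t`-closed. -/
theorem statement10 {X : Type*} [Infinite X] (t : TopologicalSpace (Equiv.Perm X))
    (hmul : @Continuous (Equiv.Perm X × Equiv.Perm X) (Equiv.Perm X)
      (@instTopologicalSpaceProd _ _ t t) t (fun p => p.1 * p.2)) (x : X) :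
    IsOpen[t] {f : Equiv.Perm X | f x = x} ↔ IsClosed[t] {f : Equiv.Perm X | f x = x} := by
  classical
  let := t
  have : ContinuousMul (Perm X) := ⟨hmul⟩
  change IsOpen (stabilizer (Perm X) x : Set (Perm X)) ↔
    IsClosed (stabilizer (Perm X) x : Set (Perm X))
  refine ⟨Subgroup.isClosed_of_isOpen _, fun hclosed => ?_⟩
  obtain ⟨y, hy⟩ := exists_ne x
  obtain ⟨A, B, hA, hB, hA1, hBy, hAB⟩ := isOpen_prod_iff.1
    (hclosed.isOpen_compl.preimage continuous_mul) 1 (swap x y) (by simpa using hy)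
  rcases isOpen_stabilizer_or_mk_compl_lt x hB ⟨_, hBy⟩ with hopen | hZ
  · exact hopen
  have hA' : IsOpen[t.coinduced (·⁻¹)] A⁻¹ := by
    rw [isOpen_coinduced]
    simpa using hA
  rcases @isOpen_stabilizer_or_mk_compl_lt X (t.coinduced (·⁻¹))
    separatelyContinuousMul_coinduced_inv x A⁻¹ hA' ⟨1, by simpa using hA1⟩ with hopen | hW
  · simpa using isOpen_coinduced.1 hopen
  obtain ⟨_, ⟨g, hg, rfl⟩, f, hf, hfg⟩ := Set.inter_nonempty_of_mk_compl_lt hZ hW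
  exact (hAB (Set.mk_mem_prod (Set.mem_inv.1 hf) hg)
    (show (f⁻¹ * g) • x = x by rw [mul_smul, ← show f • x = g • x from hfg, inv_smul_smul])).elim
end

section
/- Let X be an infinite set and let x, y ∈ X with x ≠ y. Then the setwise stabilizer Sym(X)_{{x,y}} = {f ∈ Sym(X) : f({x,y}) = {x,y}} is a closed subset of Sym(X) with respect to the semigroup Zariski topology Z(Sym(X)). -/
open Topology TopologicalSpace

/-!
A permutation `f` stabilizes `{x, y}` exactly when it commutes with the transposition
`(x y)`, because `f (x y) f⁻¹ = (f x f y)`. Commuting with a fixed element is the equation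
`f * t = t * f` between two semigroup polynomials of degree one, so the stabilizer is
Zariski closed.
-/

theorem isClosed_sgZariski_setOf_sgEval_eq {M : Type*} [Monoid M] (a : M) (l : List M)
    (b : M) (m : List M) :
    IsClosed[sgZariski M] {x | sgEval x a l = sgEval x b m} := by
  rw [← @isOpen_compl_iff _ _ (sgZariski M), Set.compl_ofPred]
  exact isOpen_generateFrom_of_mem ⟨a, l, b, m, rfl⟩

theorem isClosed_sgZariski_setOf_commute {M : Type*} [Monoid M] (a : M) :
    IsClosed[sgZariski M] {x | Commute x a} := by
  convert isClosed_sgZariski_setOf_sgEval_eq 1 [a] a [1] using 3 with x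
  simp [sgEval, Commute, SemiconjBy]

namespace Equiv

variable {α : Type*} [DecidableEq α]

theorem setOf_swap_apply_ne_self {a b : α} (hab : a ≠ b) :
    {z | swap a b z ≠ z} = {a, b} := by
  ext z
  simp [swap_apply_ne_self_iff, hab]

theorem swap_eq_swap_iff {a b x y : α} (hxy : x ≠ y) :
    swap a b = swap x y ↔ ({a, b} : Set α) = {x, y} := by
  constructor
  · intro h
    have hab : a ≠ b := by
      rintro rfl
      have hx := congr($h x)
      simp only [swap_self, refl_apply, swap_apply_left] at hx
      exact hxy hx
    rw [← setOf_swap_apply_ne_self hab, h, setOf_swap_apply_ne_self hxy]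
  · intro h
    rcases Set.pair_eq_pair_iff.mp h with ⟨rfl, rfl⟩ | ⟨rfl, rfl⟩
    · rfl
    · exact swap_comm a b

theorem Perm.commute_swap_iff_image_pair {x y : α} (hxy : x ≠ y) (f : Perm α) :
    Commute f (swap x y) ↔ f '' {x, y} = {x, y} := by
  rw [Commute, SemiconjBy, mul_swap_eq_swap_mul, mul_left_inj, swap_eq_swap_iff hxy,
    Set.image_pair]

end Equiv

theorem statement11_general {X : Type*} (x y : X) (hxy : x ≠ y) :
    IsClosed[sgZariski (Equiv.Perm X)]
      {f : Equiv.Perm X | (fun a => f a) '' {x, y} = {x, y}} := by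
  classical
  have hstab : {f : Equiv.Perm X | (fun a => f a) '' {x, y} = {x, y}} =
      {f | Commute f (Equiv.swap x y)} := by
    ext f
    exact (Equiv.Perm.commute_swap_iff_image_pair hxy f).symm
  rw [hstab]
  exact isClosed_sgZariski_setOf_commute _

/-- For an infinite set `X` and distinct `x, y ∈ X`, the setwise stabilizer of `{x,y}` is
closed in the semigroup Zariski topology on `Sym(X)`. -/
theorem statement11 {X : Type*} [Infinite X] (x y : X) (hxy : x ≠ y) :
    IsClosed[sgZariski (Equiv.Perm X)]
      {f : Equiv.Perm X | (fun a => f a) '' {x, y} = {x, y}} :=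
  statement11_general x y hxy
end

section
/- Let X be an infinite set and x ∈ X. Then U_{x,x} = {f ∈ Sym(X) : f(x) = x} is a maximal subsemigroup of Sym(X): for all f, g ∈ Sym(X) ∖ U_{x,x} there exist u, v ∈ U_{x,x} with g = u·f·v; in particular, for every f ∈ Sym(X) ∖ U_{x,x}, the subsemigroup of Sym(X) generated by U_{x,x} ∪ {f} is all of Sym(X). -/
open Equiv

theorem Equiv.Perm.exists_fixing_mul_mul_eq {α : Type*} [DecidableEq α] (x : α)
    {f g : Perm α} (hf : f x ≠ x) (hg : g x ≠ x) :
    ∃ u v : Perm α, u x = x ∧ v x = x ∧ g = u * f * v := by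
  have hg' : g⁻¹ x ≠ x := fun h => hg (Perm.inv_eq_iff_eq.1 h).symm
  have hf' : f⁻¹ x ≠ x := fun h => hf (Perm.inv_eq_iff_eq.1 h).symm
  -- `v` carries `g⁻¹ x` to `f⁻¹ x`, which is exactly what makes `u := g * v⁻¹ * f⁻¹` fix `x`.
  set v := swap (g⁻¹ x) (f⁻¹ x)
  refine ⟨g * v⁻¹ * f⁻¹, v, ?_, swap_apply_of_ne_of_ne hg'.symm hf'.symm, by group⟩
  simp [v, swap_inv]

theorem Subsemigroup.closure_union_singleton_eq_top {M : Type*} [Semigroup M] {S : Set M}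
    {f : M} (h : ∀ g, g ∉ S → ∃ u ∈ S, ∃ v ∈ S, g = u * f * v) :
    Subsemigroup.closure (S ∪ {f}) = ⊤ := by
  refine eq_top_iff.2 fun g _ => ?_
  have hS : S ⊆ Subsemigroup.closure (S ∪ {f}) :=
    Set.subset_union_left.trans Subsemigroup.subset_closure
  have hf : f ∈ Subsemigroup.closure (S ∪ {f}) :=
    Subsemigroup.subset_closure (Set.mem_union_right S rfl)
  by_cases hg : g ∈ S
  · exact hS hg
  · obtain ⟨u, hu, v, hv, rfl⟩ := h g hg
    exact mul_mem (mul_mem (hS hu) hf) (hS hv)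

theorem statement13_general {X : Type*} (x : X) :
    (∀ f g : Equiv.Perm X, f x ≠ x → g x ≠ x →
      ∃ u v : Equiv.Perm X, u x = x ∧ v x = x ∧ g = u * f * v) ∧
    (∀ f : Equiv.Perm X, f x ≠ x →
      Subsemigroup.closure ({h : Equiv.Perm X | h x = x} ∪ {f}) = ⊤) := by
  classical
  refine ⟨fun f g hf hg => Perm.exists_fixing_mul_mul_eq x hf hg, fun f hf => ?_⟩
  refine Subsemigroup.closure_union_singleton_eq_top fun g hg => ?_
  obtain ⟨u, v, hu, hv, rfl⟩ := Perm.exists_fixing_mul_mul_eq x hf hg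
  exact ⟨u, hu, v, hv, rfl⟩

/-- For an infinite set `X` and `x ∈ X`, the stabilizer `U_{x,x} = {f ∈ Sym(X) | f x = x}` is
a maximal subsemigroup of `Sym(X)`: any `g ∉ U_{x,x}` is a product `u * f * v` with
`u, v ∈ U_{x,x}`, for any fixed `f ∉ U_{x,x}`; in particular the subsemigroup generated by
`U_{x,x} ∪ {f}` is all of `Sym(X)`. -/
theorem statement13 {X : Type*} [Infinite X] (x : X) :
    (∀ f g : Equiv.Perm X, f x ≠ x → g x ≠ x →
      ∃ u v : Equiv.Perm X, u x = x ∧ v x = x ∧ g = u * f * v) ∧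
    (∀ f : Equiv.Perm X, f x ≠ x →
      Subsemigroup.closure ({h : Equiv.Perm X | h x = x} ∪ {f}) = ⊤) :=
  statement13_general x
end
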